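/- arXiv:2511.01933 — 3 statements merged into one kernel-verified Lean document; each statement's English description precedes it below -/
import Mathlib

section
/- Let H be a complex Hilbert space, T > 0, and let ζ : ℝ → H be continuous and T-periodically correlated, i.e. ⟨ζ(t+T), ζ(s+T)⟩_H = ⟨ζ(t), ζ(s)⟩_H for all t,s ∈ ℝ. For j ∈ ℤ and integer k ≥ 1 define the Fourier coefficient vectors ζ_{j,k} := T^{-1/2} ∫₀ᵀ ζ(u+jT)·exp(−2πi·((-1)^k·⌊k/2⌋)·u/T) du ∈ H (Bochner integral). Then the family of coefficient sequences is jointly wide-sense stationary: for all j₁, j₂ ∈ ℤ and all integers k, n ≥ 1, ⟨ζ_{j₁,k}, ζ_{j₂,n}⟩_H = ⟨ζ_{j₁−j₂,k}, ζ_{0,n}⟩_H, i.e. the correlation depends on j₁ and j₂ only through their difference j₁ − j₂. -/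
/-!
Writing `⟪∫ f, ∫ g⟫` as the double integral `∫∫ ⟪f u, g v⟫`, the inner product of two
coefficient vectors only depends on the kernel `(u, v) ↦ ⟪ζ (u + j₁ T), ζ (v + j₂ T)⟫`.
Periodic correlation makes `(t, s) ↦ ⟪ζ t, ζ s⟫` periodic with period `(T, T)`, hence invariant
under the diagonal shift by `j₂ T`, which turns this kernel into the one for `(j₁ - j₂, 0)`.
-/

open MeasureTheory
open scoped InnerProductSpace

section InnerIntegral

variable {𝕜 E α β : Type*} [RCLike 𝕜] [NormedAddCommGroup E] [InnerProductSpace 𝕜 E]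
  [NormedSpace ℝ E] [CompleteSpace E] [MeasurableSpace α] [MeasurableSpace β]
  {μ : Measure α} {ν : Measure β}

theorem integral_inner_const {f : α → E} (hf : Integrable f μ) (c : E) :
    ∫ a, ⟪f a, c⟫_𝕜 ∂μ = ⟪∫ a, f a ∂μ, c⟫_𝕜 := by
  simp_rw [← inner_conj_symm _ c, integral_conj, integral_inner hf]

theorem inner_integral_integral {f : α → E} {g : β → E} (hf : Integrable f μ)
    (hg : Integrable g ν) :
    ⟪∫ a, f a ∂μ, ∫ b, g b ∂ν⟫_𝕜 = ∫ b, ∫ a, ⟪f a, g b⟫_𝕜 ∂μ ∂ν := by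
  simp_rw [integral_inner_const hf, integral_inner hg]

theorem inner_integral_integral_congr {f f' : α → E} {g g' : β → E} (hf : Integrable f μ)
    (hg : Integrable g ν) (hf' : Integrable f' μ) (hg' : Integrable g' ν)
    (h : ∀ a b, ⟪f a, g b⟫_𝕜 = ⟪f' a, g' b⟫_𝕜) :
    ⟪∫ a, f a ∂μ, ∫ b, g b ∂ν⟫_𝕜 = ⟪∫ a, f' a ∂μ, ∫ b, g' b ∂ν⟫_𝕜 := by
  simp only [inner_integral_integral hf hg, inner_integral_integral hf' hg', h]

end InnerIntegral

theorem inner_add_int_mul_eq {𝕜 E : Type*} [RCLike 𝕜] [NormedAddCommGroup E]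
    [InnerProductSpace 𝕜 E] {T : ℝ} {ζ : ℝ → E}
    (hpc : ∀ t s : ℝ, ⟪ζ (t + T), ζ (s + T)⟫_𝕜 = ⟪ζ t, ζ s⟫_𝕜) (m : ℤ) (t s : ℝ) :
    ⟪ζ (t + m * T), ζ (s + m * T)⟫_𝕜 = ⟪ζ t, ζ s⟫_𝕜 := by
  have hper : Function.Periodic (fun p : ℝ × ℝ => ⟪ζ p.1, ζ p.2⟫_𝕜) (T, T) :=
    fun p => hpc p.1 p.2
  simpa using hper.zsmul m (t, s)

theorem fourier_coefficients_jointly_stationary_general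
    {H : Type*} [NormedAddCommGroup H] [InnerProductSpace ℂ H] [CompleteSpace H]
    (T : ℝ) (ζ : ℝ → H) (hcont : Continuous ζ)
    (hpc : ∀ t s : ℝ, (inner ℂ (ζ (t + T)) (ζ (s + T)) : ℂ) = inner ℂ (ζ t) (ζ s))
    (Z : ℤ → ℕ → H)
    (hZ : ∀ (j : ℤ) (k : ℕ), Z j k =
      ((Real.sqrt T : ℂ))⁻¹ •
        ∫ u in Set.Ico (0 : ℝ) T,
          Complex.exp (-(2 * Real.pi * Complex.I) *
              ((((-1 : ℤ) ^ k * ((k : ℤ) / 2) : ℤ) : ℂ)) * (u : ℂ) / (T : ℂ)) •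
            ζ (u + (j : ℝ) * T)) :
    ∀ (j₁ j₂ : ℤ) (k n : ℕ), 1 ≤ k → 1 ≤ n →
      (inner ℂ (Z j₁ k) (Z j₂ n) : ℂ) = inner ℂ (Z (j₁ - j₂) k) (Z 0 n) := by
  intro j₁ j₂ k n _ _
  simp only [hZ, inner_smul_left, inner_smul_right]
  congr 2
  refine inner_integral_integral_congr ?_ ?_ ?_ ?_ fun u v => ?_
  any_goals exact (Continuous.integrableOn_Icc (by fun_prop)).mono_set Set.Ico_subset_Icc_self
  have hshift : u + j₁ * T = u + (j₁ - j₂ : ℤ) * T + j₂ * T := by push_cast; ring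
  simp only [inner_smul_left, inner_smul_right, hshift, inner_add_int_mul_eq hpc,
    Int.cast_zero, zero_mul, add_zero]

theorem fourier_coefficients_jointly_stationary
    {H : Type*} [NormedAddCommGroup H] [InnerProductSpace ℂ H] [CompleteSpace H]
    (T : ℝ) (hT : 0 < T) (ζ : ℝ → H) (hcont : Continuous ζ)
    (hpc : ∀ t s : ℝ, (inner ℂ (ζ (t + T)) (ζ (s + T)) : ℂ) = inner ℂ (ζ t) (ζ s))
    (Z : ℤ → ℕ → H)
    (hZ : ∀ (j : ℤ) (k : ℕ), Z j k =
      ((Real.sqrt T : ℂ))⁻¹ •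
        ∫ u in Set.Ico (0 : ℝ) T,
          Complex.exp (-(2 * Real.pi * Complex.I) *
              ((((-1 : ℤ) ^ k * ((k : ℤ) / 2) : ℤ) : ℂ)) * (u : ℂ) / (T : ℂ)) •
            ζ (u + (j : ℝ) * T)) :
    ∀ (j₁ j₂ : ℤ) (k n : ℕ), 1 ≤ k → 1 ≤ n →
      (inner ℂ (Z j₁ k) (Z j₂ n) : ℂ) = inner ℂ (Z (j₁ - j₂) k) (Z 0 n) :=
  fourier_coefficients_jointly_stationary_general T ζ hcont hpc Z hZ
end

section
/- Let ℓ² = ℓ²(ℕ;ℂ) and let F : [−π,π) → B(ℓ²) be weakly measurable with bounded, self-adjoint, positive semidefinite values. Let a : ℕ → ℓ² satisfy Σ_{j=0}^∞ ‖a_j‖ < ∞ and set A(λ) = Σ_{j=0}^∞ a_j e^{ijλ}. Suppose h⁰ is a negative-frequency function such that w(λ) := F(λ)(A(λ)−h⁰(λ)) satisfies ∫_{−π}^{π} ‖w(λ)‖² dλ < ∞ and ∫_{−π}^{π} w(λ)·e^{−ijλ} dλ = 0 for every integer j ≤ −1, and such that Δ(h⁰) := (1/2π)∫_{−π}^{π}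 ⟨F(λ)(A(λ)−h⁰(λ)), A(λ)−h⁰(λ)⟩ dλ < ∞. Define c_j := (1/2π)·∫_{−π}^{π} w(λ)·e^{−ijλ} dλ ∈ ℓ² for j ≥ 0. Then the value of the error functional is Δ(h⁰) = Σ_{j=0}^∞ ⟨c_j, a_j⟩, where ⟨x,y⟩ = Σ_k x_k·conj(y_k); in particular this series converges and its sum is real and nonnegative. -/
open MeasureTheory
open scoped ENNReal

noncomputable section

abbrev Elltwo : Type := lp (fun _ : ℕ => ℂ) 2

def pmeas : Measure ℝ := volume.restrict (Set.Ico (-Real.pi) Real.pi)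

def NegFreq (h : ℝ → Elltwo) : Prop :=
  MemLp h 2 pmeas ∧
  ∀ j : ℤ, 0 ≤ j →
    (∫ l, Complex.exp (-Complex.I * (j : ℂ) * (l : ℂ)) • h l ∂pmeas) = 0

/-- The paper's noise-free error functional `Δ(h)`. -/
def MSE0 (F : ℝ → Elltwo →L[ℂ] Elltwo) (A : ℝ → Elltwo) (h : ℝ → Elltwo) : ℝ≥0∞ :=
  ENNReal.ofReal (1 / (2 * Real.pi)) *
    ∫⁻ l, ENNReal.ofReal ((inner ℂ ((F l) (A l - h l)) (A l - h l) : ℂ)).re ∂pmeas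

/-!
Write `x = A - h⁰`, so that `w = F x`. Positivity of `F(λ)` makes `⟪x, w⟫ = ⟪F x, x⟫` real and
nonnegative, and `Δ(h⁰)` is `(2π)⁻¹ ∫ ⟪x, w⟫`. The part `∫ ⟪h⁰, w⟫` vanishes: in each coordinate
of a Hilbert basis, `h⁰` has only negative and `w` only nonnegative frequencies, so by Parseval's
identity on `[-π, π)` they are orthogonal. The remaining part `∫ ⟪A, w⟫` is integrated termwise
along the absolutely convergent series `A = ∑ aⱼ e^{ijλ}`, which gives `2π ∑ ⟪aⱼ, cⱼ⟫`.
-/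

open Complex Set
open scoped InnerProductSpace Real

theorem hasSum_inner_fourierCoeffOn {a b : ℝ} {f g : ℝ → ℂ} (hab : a < b)
    (hf : MemLp f 2 (volume.restrict (Ioc a b))) (hg : MemLp g 2 (volume.restrict (Ioc a b))) :
    HasSum (fun i => ⟪fourierCoeffOn hab f i, fourierCoeffOn hab g i⟫_ℂ)
      ((b - a)⁻¹ • ∫ x in a..b, ⟪f x, g x⟫_ℂ) := by
  have := Fact.mk (by linarith : 0 < b - a)
  rw [← add_sub_cancel a b] at hf hg
  have hf' := hf.memLp_liftIoc.haarAddCircle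
  have hg' := hg.memLp_liftIoc.haarAddCircle
  have hrepr {u : ℝ → ℂ} (hu : MemLp (AddCircle.liftIoc (b - a) a u) 2 AddCircle.haarAddCircle)
      (i : ℤ) : fourierBasis.repr hu.toLp i = fourierCoeffOn hab u i := by
    rw [fourierBasis_repr, fourierCoeff_congr_ae hu.coeFn_toLp, fourierCoeff_liftIoc_eq]
    simp
  suffices (b - a)⁻¹ • ∫ x in a..b, ⟪f x, g x⟫_ℂ = ⟪hf'.toLp, hg'.toLp⟫_ℂ by
    rw [this, ← LinearIsometryEquiv.inner_map_map fourierBasis.repr]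
    simpa only [hrepr] using
      lp.hasSum_inner (𝕜 := ℂ) (fourierBasis.repr hf'.toLp) (fourierBasis.repr hg'.toLp)
  nth_rw 2 [← add_sub_cancel a b]
  rw [L2.inner_def, ← AddCircle.integral_liftIoc_eq_intervalIntegral,
    ← AddCircle.integral_haarAddCircle]
  refine integral_congr_ae ?_
  filter_upwards [hf'.coeFn_toLp, hg'.coeFn_toLp] with x hfx hgx
  rw [hfx, hgx]
  rfl

theorem MeasureTheory.MemLp.integrable_inner {α 𝕜 E : Type*} [MeasurableSpace α] {μ : Measure α}
    [RCLike 𝕜] [NormedAddCommGroup E] [InnerProductSpace 𝕜 E] {f g : α → E}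
    (hf : MemLp f 2 μ) (hg : MemLp g 2 μ) : Integrable (fun x => ⟪f x, g x⟫_𝕜) μ := by
  refine (L2.integrable_inner (𝕜 := 𝕜) hf.toLp hg.toLp).congr ?_
  filter_upwards [hf.coeFn_toLp, hg.coeFn_toLp] with x hfx hgx
  rw [hfx, hgx]

theorem Orthonormal.tsum_enorm_inner_mul_inner_le {ι 𝕜 E : Type*} [RCLike 𝕜]
    [NormedAddCommGroup E] [InnerProductSpace 𝕜 E] {v : ι → E} (hv : Orthonormal 𝕜 v) (x y : E) :
    ∑' i, ‖⟪x, v i⟫_𝕜 * ⟪v i, y⟫_𝕜‖ₑ ≤ ENNReal.ofReal (‖x‖ ^ 2 + ‖y‖ ^ 2) := by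
  have hbessel (z : E) : ∑' i, ENNReal.ofReal (‖⟪v i, z⟫_𝕜‖ ^ 2) ≤ ENNReal.ofReal (‖z‖ ^ 2) := by
    rw [← ENNReal.ofReal_tsum_of_nonneg (fun _ => by positivity) (hv.inner_products_summable z)]
    exact ENNReal.ofReal_le_ofReal (hv.tsum_inner_products_le z)
  have mul_le_sq_add_sq (s t : ℝ) : s * t ≤ s ^ 2 + t ^ 2 := by nlinarith [sq_nonneg (s - t)]
  calc ∑' i, ‖⟪x, v i⟫_𝕜 * ⟪v i, y⟫_𝕜‖ₑ
      ≤ ∑' i, (ENNReal.ofReal (‖⟪v i, x⟫_𝕜‖ ^ 2) + ENNReal.ofReal (‖⟪v i, y⟫_𝕜‖ ^ 2)) := by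
        refine ENNReal.tsum_le_tsum fun i => ?_
        rw [← ENNReal.ofReal_add (by positivity) (by positivity), ← ofReal_norm, norm_mul,
          norm_inner_symm]
        exact ENNReal.ofReal_le_ofReal (mul_le_sq_add_sq _ _)
    _ ≤ ENNReal.ofReal (‖x‖ ^ 2) + ENNReal.ofReal (‖y‖ ^ 2) := by
        rw [ENNReal.tsum_add]
        exact add_le_add (hbessel x) (hbessel y)
    _ = ENNReal.ofReal (‖x‖ ^ 2 + ‖y‖ ^ 2) :=
        (ENNReal.ofReal_add (by positivity) (by positivity)).symm

theorem HilbertBasis.integral_inner_eq_tsum {α ι 𝕜 E : Type*} [MeasurableSpace α] {μ : Measure α}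
    [Countable ι] [RCLike 𝕜] [NormedAddCommGroup E] [InnerProductSpace 𝕜 E]
    (b : HilbertBasis ι 𝕜 E) {f g : α → E} (hf : MemLp f 2 μ) (hg : MemLp g 2 μ) :
    ∫ x, ⟪f x, g x⟫_𝕜 ∂μ = ∑' i, ∫ x, ⟪⟪b i, f x⟫_𝕜, ⟪b i, g x⟫_𝕜⟫_𝕜 ∂μ := by
  have hcoord (i : ι) (x : α) :
      ⟪⟪b i, f x⟫_𝕜, ⟪b i, g x⟫_𝕜⟫_𝕜 = ⟪f x, b i⟫_𝕜 * ⟪b i, g x⟫_𝕜 := by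
    rw [RCLike.inner_apply, inner_conj_symm, mul_comm]
  have hmeas (i : ι) : AEStronglyMeasurable (fun x => ⟪f x, b i⟫_𝕜 * ⟪b i, g x⟫_𝕜) μ :=
    (hf.1.inner aestronglyMeasurable_const).mul (aestronglyMeasurable_const.inner hg.1)
  have hnorm_sq : Integrable (fun x => ‖f x‖ ^ 2 + ‖g x‖ ^ 2) μ :=
    ((memLp_two_iff_integrable_sq_norm hf.1).1 hf).add
      ((memLp_two_iff_integrable_sq_norm hg.1).1 hg)
  simp_rw [hcoord, ← b.tsum_inner_mul_inner (f _) (g _)]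
  refine integral_tsum hmeas (ne_of_lt ?_)
  calc ∑' i, ∫⁻ x, ‖⟪f x, b i⟫_𝕜 * ⟪b i, g x⟫_𝕜‖ₑ ∂μ
      = ∫⁻ x, ∑' i, ‖⟪f x, b i⟫_𝕜 * ⟪b i, g x⟫_𝕜‖ₑ ∂μ :=
        (lintegral_tsum fun i => (hmeas i).enorm).symm
    _ ≤ ∫⁻ x, ENNReal.ofReal (‖f x‖ ^ 2 + ‖g x‖ ^ 2) ∂μ :=
        lintegral_mono fun x => b.orthonormal.tsum_enorm_inner_mul_inner_le (f x) (g x)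
    _ < ⊤ := hnorm_sq.lintegral_lt_top

instance : IsFiniteMeasure pmeas := by
  rw [pmeas]; infer_instance

theorem pmeas_eq_restrict_Ioc : pmeas = volume.restrict (Ioc (-π) π) :=
  Measure.restrict_congr_set Ico_ae_eq_Ioc

section FourierMoment

variable {E : Type*} [NormedAddCommGroup E]

def fourierMoment [NormedSpace ℂ E] (f : ℝ → E) (n : ℤ) : E :=
  ∫ l, cexp (-I * n * l) • f l ∂pmeas

theorem norm_exp_neg_I_mul (n : ℤ) (l : ℝ) : ‖cexp (-I * n * l)‖ = 1 := by
  simp [Complex.norm_exp]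

theorem fourierCoeffOn_neg_pi_pi [NormedSpace ℂ E] (f : ℝ → E) (n : ℤ) :
    fourierCoeffOn (neg_lt_self Real.pi_pos) f n = (2 * π)⁻¹ • fourierMoment f n := by
  rw [fourierCoeffOn_eq_integral, intervalIntegral.integral_of_le (by linarith [Real.pi_pos]),
    fourierMoment, pmeas_eq_restrict_Ioc, sub_neg_eq_add, ← two_mul, one_div]
  congr 1
  refine setIntegral_congr_fun measurableSet_Ioc fun x _ => ?_
  rw [fourier_coe_apply]
  congr 2
  field_simp
  push_cast
  ring

theorem MeasureTheory.Integrable.exp_neg_I_mul_smul [NormedSpace ℂ E] {μ : Measure ℝ} {f : ℝ → E}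
    (hf : Integrable f μ) (n : ℤ) : Integrable (fun l : ℝ => cexp (-I * n * l) • f l) μ :=
  hf.bdd_smul 1 (by fun_prop) (.of_forall fun l => (norm_exp_neg_I_mul n l).le)

theorem fourierMoment_inner [InnerProductSpace ℂ E] [CompleteSpace E] {f : ℝ → E}
    (hf : Integrable f pmeas) (c : E) (n : ℤ) :
    fourierMoment (fun l => ⟪c, f l⟫_ℂ) n = ⟪c, fourierMoment f n⟫_ℂ := by
  simp_rw [fourierMoment, ← integral_inner (hf.exp_neg_I_mul_smul n), inner_smul_right,
    smul_eq_mul]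

theorem Complex.integral_inner_eq_zero_of_fourierMoment {u v : ℝ → ℂ} (hu : MemLp u 2 pmeas)
    (hv : MemLp v 2 pmeas) (huv : ∀ n, fourierMoment u n = 0 ∨ fourierMoment v n = 0) :
    ∫ l, ⟪u l, v l⟫_ℂ ∂pmeas = 0 := by
  rw [pmeas_eq_restrict_Ioc] at hu hv
  have hparseval := hasSum_inner_fourierCoeffOn (neg_lt_self Real.pi_pos) hu hv
  have hzero (n : ℤ) : ⟪fourierCoeffOn (neg_lt_self Real.pi_pos) u n,
      fourierCoeffOn (neg_lt_self Real.pi_pos) v n⟫_ℂ = 0 := by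
    rcases huv n with h | h <;> simp [fourierCoeffOn_neg_pi_pi, h]
  simp only [hzero] at hparseval
  rw [pmeas_eq_restrict_Ioc, ← intervalIntegral.integral_of_le (by linarith [Real.pi_pos])]
  simpa [Real.pi_ne_zero] using hparseval.unique hasSum_zero

theorem integral_inner_eq_zero_of_fourierMoment {ι : Type*} [Countable ι] [InnerProductSpace ℂ E]
    [CompleteSpace E] (b : HilbertBasis ι ℂ E) {f g : ℝ → E} (hf : MemLp f 2 pmeas)
    (hg : MemLp g 2 pmeas) (hfg : ∀ n, fourierMoment f n = 0 ∨ fourierMoment g n = 0) :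
    ∫ l, ⟪f l, g l⟫_ℂ ∂pmeas = 0 := by
  rw [b.integral_inner_eq_tsum hf hg]
  have hcoord (i : ι) : ∫ l, ⟪⟪b i, f l⟫_ℂ, ⟪b i, g l⟫_ℂ⟫_ℂ ∂pmeas = 0 := by
    refine Complex.integral_inner_eq_zero_of_fourierMoment (hf.const_inner _) (hg.const_inner _)
      fun n => ?_
    rw [fourierMoment_inner (hf.integrable one_le_two),
      fourierMoment_inner (hg.integrable one_le_two)]
    rcases hfg n with h | h <;> simp [h]
  simp only [hcoord, tsum_zero]

end FourierMoment

section FourierSeries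

variable {E : Type*} [NormedAddCommGroup E]

theorem norm_exp_I_mul_smul [NormedSpace ℂ E] (n : ℕ) (l : ℝ) (x : E) :
    ‖cexp (I * n * l) • x‖ = ‖x‖ := by
  simp [norm_smul, Complex.norm_exp]

theorem memLp_tsum_exp_I_mul_smul [NormedSpace ℂ E] [CompleteSpace E] {a : ℕ → E}
    (ha : Summable fun j => ‖a j‖) (p : ℝ≥0∞) (μ : Measure ℝ) [IsFiniteMeasure μ] :
    MemLp (fun l : ℝ => ∑' j : ℕ, cexp (I * j * l) • a j) p μ := by
  have hcont : Continuous fun l : ℝ => ∑' j : ℕ, cexp (I * j * l) • a j :=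
    continuous_tsum (fun j => by fun_prop) ha fun j l => (norm_exp_I_mul_smul j l (a j)).le
  refine (memLp_top_of_bound hcont.aestronglyMeasurable (∑' j, ‖a j‖)
    (.of_forall fun l => ?_)).mono_exponent le_top
  calc ‖∑' j : ℕ, cexp (I * j * l) • a j‖ ≤ ∑' j : ℕ, ‖cexp (I * j * l) • a j‖ :=
        norm_tsum_le_tsum_norm (by simpa only [norm_exp_I_mul_smul] using ha)
    _ = ∑' j, ‖a j‖ := by simp only [norm_exp_I_mul_smul]

theorem HasSum.inner_const {ι 𝕜 : Type*} [RCLike 𝕜] [InnerProductSpace 𝕜 E] {v : ι → E} {s : E}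
    (h : HasSum v s) (y : E) : HasSum (fun i => ⟪v i, y⟫_𝕜) ⟪s, y⟫_𝕜 := by
  simpa only [innerSL_apply_apply, RCLike.star_def, inner_conj_symm] using
    (h.mapL (innerSL 𝕜 y)).star

theorem hasSum_inner_fourierMoment [InnerProductSpace ℂ E] [CompleteSpace E] {a : ℕ → E}
    (ha : Summable fun j => ‖a j‖) {w : ℝ → E} (hw : Integrable w pmeas) :
    HasSum (fun j : ℕ => ⟪a j, fourierMoment w j⟫_ℂ)
      (∫ l, ⟪∑' j : ℕ, cexp (I * j * l) • a j, w l⟫_ℂ ∂pmeas) := by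
  set F : ℕ → ℝ → ℂ := fun j l => ⟪a j, cexp (-I * (j : ℤ) * l) • w l⟫_ℂ
  have hF (l : ℝ) : ⟪∑' j : ℕ, cexp (I * j * l) • a j, w l⟫_ℂ = ∑' j, F j l := by
    have hsum : Summable fun j : ℕ => cexp (I * j * l) • a j :=
      .of_norm (by simpa only [norm_exp_I_mul_smul] using ha)
    rw [(hsum.hasSum.inner_const (w l)).tsum_eq.symm]
    refine tsum_congr fun j => ?_
    simp only [F, inner_smul_left, inner_smul_right, ← Complex.exp_conj]
    simp
  have hFint (j : ℕ) : Integrable (F j) pmeas := (hw.exp_neg_I_mul_smul j).const_inner (a j)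
  have hFbound (j : ℕ) : ∫ l, ‖F j l‖ ∂pmeas ≤ ‖a j‖ * ∫ l, ‖w l‖ ∂pmeas := by
    rw [← integral_const_mul]
    refine integral_mono (hFint j).norm (hw.norm.const_mul _) fun l => ?_
    calc ‖F j l‖ ≤ ‖a j‖ * ‖cexp (-I * (j : ℤ) * l) • w l‖ := norm_inner_le_norm _ _
      _ = ‖a j‖ * ‖w l‖ := by rw [norm_smul, norm_exp_neg_I_mul, one_mul]
  have hFsum : Summable fun j => ∫ l, ‖F j l‖ ∂pmeas :=
    .of_nonneg_of_le (fun j => integral_nonneg fun l => norm_nonneg _) hFbound (ha.mul_right _)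
  simp_rw [hF]
  have hmoment (j : ℕ) : ∫ l, F j l ∂pmeas = ⟪a j, fourierMoment w j⟫_ℂ :=
    integral_inner (hw.exp_neg_I_mul_smul j) (a j)
  simpa only [hmoment] using hasSum_integral_of_summable_integral_norm hFint hFsum

end FourierSeries

theorem MSE0_eq_ofReal_integral {F : ℝ → Elltwo →L[ℂ] Elltwo} {A h : ℝ → Elltwo}
    (hF : ∀ l, (F l).IsPositive)
    (hint : Integrable (fun l => (⟪F l (A l - h l), A l - h l⟫_ℂ).re) pmeas) :
    MSE0 F A h = ENNReal.ofReal
      ((2 * π)⁻¹ * ∫ l, (⟪F l (A l - h l), A l - h l⟫_ℂ).re ∂pmeas) := by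
  rw [MSE0, ← ofReal_integral_eq_lintegral_ofReal hint
    (.of_forall fun l => (hF l).re_inner_nonneg_left _), ← ENNReal.ofReal_mul (by positivity),
    one_div]

/- The paper's `⟨c, a⟩ = Σ_k c_k·conj(a_k)` is Mathlib's `inner a c`, which is conjugate-linear in
the first slot. -/
theorem noise_free_error_formula_general
    (F : ℝ → Elltwo →L[ℂ] Elltwo)
    (hFpos : ∀ l : ℝ, (F l).IsPositive)
    (a : ℕ → Elltwo) (ha : Summable fun j : ℕ => ‖a j‖)
    (A : ℝ → Elltwo)
    (hA : ∀ l : ℝ, A l = ∑' j : ℕ, Complex.exp (Complex.I * (j : ℂ) * (l : ℂ)) • a j)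
    (h0 : ℝ → Elltwo) (hh0 : NegFreq h0)
    (w : ℝ → Elltwo)
    (hw : ∀ l : ℝ, w l = (F l) (A l - h0 l))
    (hwL2 : MemLp w 2 pmeas)
    (hworth : ∀ j : ℤ, j ≤ -1 →
      (∫ l, Complex.exp (-Complex.I * (j : ℂ) * (l : ℂ)) • w l ∂pmeas) = 0)
    (c : ℕ → Elltwo)
    (hc : ∀ j : ℕ, c j = ((2 * Real.pi : ℝ) : ℂ)⁻¹ •
      ∫ l, Complex.exp (-Complex.I * (j : ℂ) * (l : ℂ)) • w l ∂pmeas) :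
    Summable (fun j : ℕ => (inner ℂ (a j) (c j) : ℂ)) ∧
    (∑' j : ℕ, (inner ℂ (a j) (c j) : ℂ)).im = 0 ∧
    0 ≤ (∑' j : ℕ, (inner ℂ (a j) (c j) : ℂ)).re ∧
    MSE0 F A h0 = ENNReal.ofReal (∑' j : ℕ, (inner ℂ (a j) (c j) : ℂ)).re := by
  set q : ℝ → ℝ := fun l => (⟪F l (A l - h0 l), A l - h0 l⟫_ℂ).re
  have hA2 : MemLp A 2 pmeas := by simpa only [← hA] using memLp_tsum_exp_I_mul_smul ha 2 pmeas
  have hx : MemLp (fun l => A l - h0 l) 2 pmeas := hA2.sub hh0.1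
  have hq (l : ℝ) : ⟪A l - h0 l, w l⟫_ℂ = q l := by
    rw [hw, ← (hFpos l).inner_left_eq_inner_right]
    exact ((hFpos l).isSymmetric.coe_re_inner_apply_self _).symm
  have hqint : Integrable q pmeas :=
    (hx.integrable_inner (𝕜 := ℂ) hwL2).re.congr (.of_forall fun l => by simp [hq])
  have hh0w : ∫ l, ⟪h0 l, w l⟫_ℂ ∂pmeas = 0 :=
    integral_inner_eq_zero_of_fourierMoment (default : HilbertBasis ℕ ℂ Elltwo) hh0.1 hwL2
      fun n => (le_or_gt 0 n).imp (hh0.2 n) fun hn => hworth n (by omega)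
  have hAw : ∫ l, ⟪A l, w l⟫_ℂ ∂pmeas = ∫ l, q l ∂pmeas := by
    calc ∫ l, ⟪A l, w l⟫_ℂ ∂pmeas
        = ∫ l, ⟪A l - h0 l, w l⟫_ℂ ∂pmeas + ∫ l, ⟪h0 l, w l⟫_ℂ ∂pmeas := by
          rw [← integral_add (hx.integrable_inner hwL2) (hh0.1.integrable_inner hwL2)]
          simp only [inner_sub_left, sub_add_cancel]
      _ = ∫ l, q l ∂pmeas := by
          simp only [hh0w, add_zero, hq]
          exact integral_ofReal
  have hcj (j : ℕ) : ⟪a j, c j⟫_ℂ = ((2 * π : ℝ) : ℂ)⁻¹ * ⟪a j, fourierMoment w j⟫_ℂ := by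
    rw [hc, inner_smul_right, fourierMoment]
    push_cast
    rfl
  have hsum : HasSum (fun j => ⟪a j, c j⟫_ℂ) ((2 * π)⁻¹ * ∫ l, q l ∂pmeas : ℝ) := by
    simpa only [hcj, ← hA, hAw, ofReal_mul, ofReal_inv] using
      (hasSum_inner_fourierMoment ha (hwL2.integrable one_le_two)).mul_left ((2 * π : ℝ) : ℂ)⁻¹
  rw [hsum.tsum_eq, ofReal_re, ofReal_im]
  refine ⟨hsum.summable, rfl, ?_, MSE0_eq_ofReal_integral hFpos hqint⟩
  exact mul_nonneg (by positivity) (integral_nonneg fun l => (hFpos l).re_inner_nonneg_left _)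

theorem noise_free_error_formula
    (F : ℝ → Elltwo →L[ℂ] Elltwo)
    (hFw : ∀ x y : Elltwo, Measurable fun l : ℝ => (inner ℂ ((F l) x) y : ℂ))
    (hFpos : ∀ l : ℝ, (F l).IsPositive)
    (a : ℕ → Elltwo) (ha : Summable fun j : ℕ => ‖a j‖)
    (A : ℝ → Elltwo)
    (hA : ∀ l : ℝ, A l = ∑' j : ℕ, Complex.exp (Complex.I * (j : ℂ) * (l : ℂ)) • a j)
    (h0 : ℝ → Elltwo) (hh0 : NegFreq h0)
    (w : ℝ → Elltwo)
    (hw : ∀ l : ℝ, w l = (F l) (A l - h0 l))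
    (hwL2 : MemLp w 2 pmeas)
    (hworth : ∀ j : ℤ, j ≤ -1 →
      (∫ l, Complex.exp (-Complex.I * (j : ℂ) * (l : ℂ)) • w l ∂pmeas) = 0)
    (hfin : MSE0 F A h0 < ⊤)
    (c : ℕ → Elltwo)
    (hc : ∀ j : ℕ, c j = ((2 * Real.pi : ℝ) : ℂ)⁻¹ •
      ∫ l, Complex.exp (-Complex.I * (j : ℂ) * (l : ℂ)) • w l ∂pmeas) :
    Summable (fun j : ℕ => (inner ℂ (a j) (c j) : ℂ)) ∧
    (∑' j : ℕ, (inner ℂ (a j) (c j) : ℂ)).im = 0 ∧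
    0 ≤ (∑' j : ℕ, (inner ℂ (a j) (c j) : ℂ)).re ∧
    MSE0 F A h0 = ENNReal.ofReal (∑' j : ℕ, (inner ℂ (a j) (c j) : ℂ)).re :=
  noise_free_error_formula_general F hFpos a ha A hA h0 hh0 w hw hwL2 hworth c hc
end
end

section
/- Let ℓ² = ℓ²(ℕ;ℂ), let M ≥ 1 be an integer, and for each u ∈ ℕ let d(u) = (d(u)_1, …, d(u)_M) be an M-tuple of vectors in ℓ² (an ∞×M matrix with columns d(u)_r), with Σ_{u=0}^∞ ‖d(u)‖_{HS} < ∞ where ‖d(u)‖_{HS} := (Σ_{r=1}^M ‖d(u)_r‖²)^{1/2}. Let a : ℕ → ℓ² satisfy Σ_{j=0}^∞ ‖a_j‖ < ∞ and Σ_{j=0}^∞ (j+1)‖a_j‖² < ∞, and set A(λ) = Σ_{j=0}^∞ a_j e^{ijλ}. For x ∈ ℓ² let d(u)ᵀx ∈ ℂ^M be given by (d(u)ᵀx)_r = Σ_{k∈ℕ} (d(u)_r)_k·x_k, and define s_t := Σ_{p=0}^∞ d(p)ᵀ a_{p+t} ∈ ℂ^M for t ≥ 0 (all these series converge absolutely and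 Σ_{t=0}^∞ ‖s_t‖² < ∞). Then for every negative-frequency function h : [−π,π) → ℓ², (1/2π)·∫_{−π}^{π} ‖ Σ_{u=0}^∞ e^{−iuλ}·d(u)ᵀ(A(λ)−h(λ)) ‖²_{ℂ^M} dλ ≥ Σ_{t=0}^∞ ‖s_t‖²_{ℂ^M}, where the integral is taken with values in [0,∞]. -/
/-!
Put `g = A - h`. Since `h` has only negative frequencies, `g` has the same nonnegative Fourier
coefficients as `A`, namely `a_m` (times `2π`). Absolute summability of `d` lets one exchange
sums and integrals, so the `t`-th Fourier coefficient of the `r`-th component of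
`P(λ)ᵀ g(λ) = Σ_u e^{-iuλ} d(u)ᵀ g(λ)` is `Σ_u d(u)_rᵀ a_{u+t} = (s_t)_r` for `t ≥ 0`. Bessel's
inequality for the orthonormal exponentials `e^{itλ}/√(2π)`, `t ≥ 0`, in `L²[-π, π)` then bounds
`Σ_t |(s_t)_r|²` by `(1/2π) ∫ |(P(λ)ᵀ g(λ))_r|² dλ`; sum over `r`. Taking `h = 0` gives the
summability of `‖s_t‖²`.
-/

open MeasureTheory
open scoped ENNReal

noncomputable section

open Complex
open scoped Real InnerProductSpace

lemma integral_tsum_of_norm_le_mul {α ι F : Type*} [NormedAddCommGroup F] [NormedSpace ℝ F]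
    [MeasurableSpace α] {μ : Measure α} [Countable ι] {f : ι → α → F} {c : ι → ℝ} {b : α → ℝ}
    (hf : ∀ i, Integrable (f i) μ) (hb : Integrable b μ) (hc : Summable c)
    (hle : ∀ i x, ‖f i x‖ ≤ c i * b x) :
    ∫ x, ∑' i, f i x ∂μ = ∑' i, ∫ x, f i x ∂μ := by
  refine (integral_tsum_of_summable_integral_norm hf <|
    (hc.mul_right (∫ x, b x ∂μ)).of_nonneg_of_le
      (fun i => integral_nonneg fun x => norm_nonneg _) fun i => ?_).symm
  rw [← integral_const_mul]
  exact integral_mono (hf i).norm (hb.const_mul _) (hle i)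

lemma norm_toLp_sq {α : Type*} [MeasurableSpace α] {μ : Measure α} {f : α → ℂ}
    (hf : MemLp f 2 μ) : ‖hf.toLp f‖ ^ 2 = ∫ x, ‖f x‖ ^ 2 ∂μ := by
  rw [Lp.norm_toLp, hf.eLpNorm_eq_integral_rpow_norm two_ne_zero ENNReal.ofNat_ne_top,
    ENNReal.toReal_ofReal (by positivity)]
  simp only [ENNReal.toReal_ofNat, Real.rpow_two]
  rw [← Real.rpow_natCast, ← Real.rpow_mul (integral_nonneg fun x => by positivity)]
  norm_num

lemma innerSL_star_apply {α : Type*} (x y : lp (fun _ : α => ℂ) 2) :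
    innerSL ℂ (star x) y = ∑' k, x k * y k := by
  simp [lp.inner_eq_tsum, mul_comm]

lemma summable_norm_mul_apply {α : Type*} (x y : lp (fun _ : α => ℂ) 2) :
    Summable fun k => ‖x k * y k‖ := by
  simpa only [norm_mul] using lp.summable_mul (by norm_num [Real.holderConjugate_iff]) x y

lemma summable_norm_apply_of_summable_sqrt_sum_sq {ι F : Type*} [Fintype ι]
    [SeminormedAddCommGroup F] {d : ℕ → ι → F}
    (hd : Summable fun u => √(∑ r, ‖d u r‖ ^ 2)) (r : ι) : Summable fun u => ‖d u r‖ :=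
  hd.of_nonneg_of_le (fun _ => norm_nonneg _) fun u =>
    Real.le_sqrt_of_sq_le <|
      Finset.single_le_sum (fun r _ => sq_nonneg ‖d u r‖) (Finset.mem_univ r)

instance inst_s8 : IsFiniteMeasure pmeas := by
  rw [pmeas]
  infer_instance

lemma pmeas_real_univ : pmeas.real Set.univ = 2 * π := by
  rw [measureReal_def, pmeas, Measure.restrict_apply_univ, Real.volume_Ico,
    ENNReal.toReal_ofReal (by linarith [Real.pi_pos])]
  ring

lemma integral_exp_I_mul_intCast_mul (n : ℤ) :
    ∫ l, cexp (I * n * l) ∂pmeas = if n = 0 then ((2 * π : ℝ) : ℂ) else 0 := by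
  split_ifs with hn
  · simp [hn, pmeas_real_univ]
  have hIn : I * n ≠ 0 := mul_ne_zero I_ne_zero (Int.cast_ne_zero.mpr hn)
  have hperiodic : cexp (I * n * π) = cexp (I * n * (-π : ℝ)) := by
    rw [show I * n * π = I * n * (-π : ℝ) + n * (2 * π * I) by push_cast; ring,
      Complex.exp_add, exp_int_mul_two_pi_mul_I, mul_one]
  rw [pmeas, integral_Ico_eq_integral_Ioc,
    ← intervalIntegral.integral_of_le (by linarith [Real.pi_pos]),
    integral_exp_mul_complex hIn, hperiodic, sub_self, zero_div]

lemma memLp_exp_I_mul_intCast_mul (n : ℤ) (p : ℝ≥0∞) :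
    MemLp (fun l : ℝ => cexp (I * n * l)) p pmeas :=
  .of_bound (by fun_prop : Continuous _).aestronglyMeasurable 1
    (ae_of_all _ fun l => by simp [norm_exp])

variable {E : Type*} [NormedAddCommGroup E] [NormedSpace ℂ E]

/-- `2π` times the `n`-th Fourier coefficient of `f` on `[-π, π)`. -/
def fourierIntegralIco (f : ℝ → E) (n : ℤ) : E := ∫ l, cexp (-I * n * l) • f l ∂pmeas

lemma integrable_exp_neg_I_mul_smul {f : ℝ → E} (hf : Integrable f pmeas) (n : ℤ) :
    Integrable (fun l : ℝ => cexp (-I * n * l) • f l) pmeas :=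
  hf.smul_of_top_right (by simpa using memLp_exp_I_mul_intCast_mul (-n) ∞)

lemma fourierIntegralIco_sub {f g : ℝ → E} (hf : Integrable f pmeas) (hg : Integrable g pmeas)
    (n : ℤ) :
    fourierIntegralIco (fun l => f l - g l) n
      = fourierIntegralIco f n - fourierIntegralIco g n := by
  simp only [fourierIntegralIco, smul_sub]
  exact integral_sub (integrable_exp_neg_I_mul_smul hf n) (integrable_exp_neg_I_mul_smul hg n)

lemma fourierIntegralIco_exp (m n : ℤ) :
    fourierIntegralIco (fun l : ℝ => cexp (I * n * l)) m
      = if m = n then ((2 * π : ℝ) : ℂ) else 0 := by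
  have hexp : ∀ l : ℝ,
      cexp (-I * m * l) • cexp (I * n * l) = cexp (I * ((n - m : ℤ) : ℂ) * l) := by
    intro l
    rw [smul_eq_mul, ← Complex.exp_add]
    push_cast
    ring_nf
  simp only [fourierIntegralIco, hexp, integral_exp_I_mul_intCast_mul, sub_eq_zero, eq_comm]

def fourierModeLp (n : ℤ) : Lp ℂ 2 pmeas :=
  (((√(2 * π))⁻¹ : ℝ) : ℂ) • (memLp_exp_I_mul_intCast_mul n 2).toLp _

lemma inner_toLp_exp_toLp (n : ℤ) {f : ℝ → ℂ} (hf : MemLp f 2 pmeas) :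
    ⟪(memLp_exp_I_mul_intCast_mul n 2).toLp _, hf.toLp f⟫_ℂ = fourierIntegralIco f n := by
  rw [L2.inner_def]
  refine integral_congr_ae ?_
  filter_upwards [(memLp_exp_I_mul_intCast_mul n 2).coeFn_toLp, hf.coeFn_toLp] with l hexp hfl
  rw [hexp, hfl, RCLike.inner_apply, ← Complex.exp_conj]
  simp [mul_comm]

lemma orthonormal_fourierModeLp : Orthonormal ℂ fourierModeLp := by
  rw [orthonormal_iff_ite]
  intro m n
  have h2π : (0 : ℝ) < 2 * π := by positivity
  simp only [fourierModeLp, inner_smul_left, inner_smul_right, inner_toLp_exp_toLp,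
    fourierIntegralIco_exp, conj_ofReal]
  split_ifs
  · rw [← ofReal_mul, ← ofReal_mul, ← mul_assoc, ← mul_inv, Real.mul_self_sqrt h2π.le,
      inv_mul_cancel₀ h2π.ne', ofReal_one]
  · simp

lemma norm_fourierIntegralIco_sq {f : ℝ → ℂ} (hf : MemLp f 2 pmeas) (n : ℤ) :
    ‖fourierIntegralIco f n‖ ^ 2 = 2 * π * ‖⟪fourierModeLp n, hf.toLp f⟫_ℂ‖ ^ 2 := by
  rw [fourierModeLp, inner_smul_left, inner_toLp_exp_toLp, conj_ofReal, norm_mul, mul_pow,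
    norm_real, Real.norm_of_nonneg (by positivity), inv_pow, Real.sq_sqrt (by positivity),
    ← mul_assoc, mul_inv_cancel₀ (by positivity), one_mul]

lemma summable_norm_fourierIntegralIco_sq {f : ℝ → ℂ} (hf : MemLp f 2 pmeas) :
    Summable fun t : ℕ => ‖fourierIntegralIco f t‖ ^ 2 := by
  simpa only [norm_fourierIntegralIco_sq hf, Function.comp_apply] using
    ((orthonormal_fourierModeLp.comp _ Nat.cast_injective).inner_products_summable
      (hf.toLp f)).mul_left (2 * π)

lemma tsum_norm_fourierIntegralIco_sq_le {f : ℝ → ℂ} (hf : MemLp f 2 pmeas) :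
    ∑' t : ℕ, ‖fourierIntegralIco f t‖ ^ 2 ≤ 2 * π * ∫ l, ‖f l‖ ^ 2 ∂pmeas := by
  simp only [norm_fourierIntegralIco_sq hf, tsum_mul_left, ← norm_toLp_sq hf]
  exact mul_le_mul_of_nonneg_left
    ((orthonormal_fourierModeLp.comp _ Nat.cast_injective).tsum_inner_products_le _)
    (by positivity)

/-- `P(λ)ᵀ y` for the transfer function `P(λ) = Σ_u e^{-iuλ} φ_u`. -/
def transfer (φ : ℕ → E →L[ℂ] ℂ) (l : ℝ) (y : E) : ℂ := ∑' u : ℕ, cexp (-I * u * l) * φ u y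

section Transfer

variable {φ : ℕ → E →L[ℂ] ℂ} (hφ : Summable fun u => ‖φ u‖)
include hφ

lemma summable_norm_apply_shift {a : ℕ → E} (ha : Summable fun j => ‖a j‖) (t : ℕ) :
    Summable fun p => ‖φ p (a (p + t))‖ :=
  (hφ.mul_right (∑' j, ‖a j‖)).of_nonneg_of_le (fun _ => norm_nonneg _) fun p =>
    ((φ p).le_opNorm _).trans <| mul_le_mul_of_nonneg_left
      (ha.le_tsum _ fun _ _ => norm_nonneg _) (norm_nonneg _)

lemma summable_exp_mul_apply (l : ℝ) (y : E) : Summable fun u : ℕ => cexp (-I * u * l) * φ u y :=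
  .of_norm_bounded (hφ.mul_right ‖y‖) fun u => by simpa [norm_exp] using (φ u).le_opNorm y

lemma norm_transfer_le (l : ℝ) (y : E) : ‖transfer φ l y‖ ≤ (∑' u, ‖φ u‖) * ‖y‖ :=
  tsum_of_norm_bounded (hφ.hasSum.mul_right ‖y‖) fun u => by
    simpa [norm_exp] using (φ u).le_opNorm y

lemma memLp_transfer {g : ℝ → E} (hg : MemLp g 2 pmeas) :
    MemLp (fun l => transfer φ l (g l)) 2 pmeas := by
  have hpartial : ∀ n, AEStronglyMeasurable
      (fun l : ℝ => ∑ u ∈ Finset.range n, cexp (-I * u * l) * φ u (g l)) pmeas := fun n =>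
    Finset.aestronglyMeasurable_fun_sum _ fun u _ =>
      (by fun_prop : Continuous fun l : ℝ => cexp (-I * u * l)).aestronglyMeasurable.mul
        ((φ u).continuous.comp_aestronglyMeasurable hg.1)
  refine hg.of_le_mul (c := ∑' u, ‖φ u‖) ?_ (ae_of_all _ fun l => norm_transfer_le hφ l (g l))
  exact aestronglyMeasurable_of_tendsto_ae _ hpartial
    (ae_of_all _ fun l => (summable_exp_mul_apply hφ l (g l)).hasSum.tendsto_sum_nat)

variable [CompleteSpace E]

lemma fourierIntegralIco_transfer {g : ℝ → E} (hg : Integrable g pmeas) {a : ℕ → E}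
    (hga : ∀ m : ℕ, fourierIntegralIco g m = ((2 * π : ℝ) : ℂ) • a m) (t : ℕ) :
    fourierIntegralIco (fun l => transfer φ l (g l)) t
      = ((2 * π : ℝ) : ℂ) * ∑' u : ℕ, φ u (a (u + t)) := by
  have hshift : ∀ (u : ℕ) (l : ℝ), cexp (-I * (t : ℤ) * l) * (cexp (-I * u * l) * φ u (g l))
      = φ u (cexp (-I * ((u + t : ℕ) : ℤ) * l) • g l) := by
    intro u l
    rw [map_smul, smul_eq_mul, ← mul_assoc, ← Complex.exp_add]
    push_cast
    ring_nf
  calc fourierIntegralIco (fun l => transfer φ l (g l)) t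
      = ∫ l, ∑' u : ℕ, φ u (cexp (-I * ((u + t : ℕ) : ℤ) * l) • g l) ∂pmeas := by
        simp only [fourierIntegralIco, transfer, smul_eq_mul, ← tsum_mul_left, hshift]
    _ = ∑' u : ℕ, ∫ l, φ u (cexp (-I * ((u + t : ℕ) : ℤ) * l) • g l) ∂pmeas :=
        integral_tsum_of_norm_le_mul
          (fun u => (φ u).integrable_comp (integrable_exp_neg_I_mul_smul hg _)) hg.norm hφ
          fun u l => by simpa [norm_smul, norm_exp] using (φ u).le_opNorm _
    _ = ∑' u : ℕ, φ u (fourierIntegralIco g (u + t : ℕ)) := by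
        congr with u
        exact (φ u).integral_comp_comm (integrable_exp_neg_I_mul_smul hg _)
    _ = ((2 * π : ℝ) : ℂ) * ∑' u : ℕ, φ u (a (u + t)) := by
        simp only [hga, map_smul, smul_eq_mul, tsum_mul_left]

/-- Bessel's inequality for `P(λ)ᵀ g(λ)`, whose nonnegative Fourier coefficients are the
`Σ_u φ_u a_{u+t}`. -/
lemma tsum_norm_tsum_apply_shift_sq_le {g : ℝ → E} (hg : MemLp g 2 pmeas) {a : ℕ → E}
    (hga : ∀ m : ℕ, fourierIntegralIco g m = ((2 * π : ℝ) : ℂ) • a m) :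
    Summable (fun t : ℕ => ‖∑' u : ℕ, φ u (a (u + t))‖ ^ 2) ∧
      ∑' t : ℕ, ‖∑' u : ℕ, φ u (a (u + t))‖ ^ 2
        ≤ (2 * π)⁻¹ * ∫ l, ‖transfer φ l (g l)‖ ^ 2 ∂pmeas := by
  have h2π : (0 : ℝ) < 2 * π := by positivity
  have hF := memLp_transfer hφ hg
  have hcoeff : ∀ t : ℕ, ‖fourierIntegralIco (fun l => transfer φ l (g l)) t‖ ^ 2
      = (2 * π) ^ 2 * ‖∑' u : ℕ, φ u (a (u + t))‖ ^ 2 := fun t => by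
    rw [fourierIntegralIco_transfer hφ (hg.integrable one_le_two) hga, norm_mul, norm_real,
      Real.norm_of_nonneg h2π.le, mul_pow]
  have hsum := summable_norm_fourierIntegralIco_sq hF
  have hle := tsum_norm_fourierIntegralIco_sq_le hF
  simp only [hcoeff] at hsum hle
  rw [tsum_mul_left, pow_two, mul_assoc] at hle
  refine ⟨(summable_mul_left_iff (by positivity)).mp hsum, ?_⟩
  rw [inv_mul_eq_div, le_div_iff₀' h2π]
  exact le_of_mul_le_mul_left hle h2π

end Transfer

variable [CompleteSpace E]

lemma memLp_tsum_exp_smul {a : ℕ → E} (ha : Summable fun j => ‖a j‖) (p : ℝ≥0∞) :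
    MemLp (fun l : ℝ => ∑' j : ℕ, cexp (I * j * l) • a j) p pmeas :=
  .of_bound (continuous_tsum (fun j => by fun_prop) ha fun j l => by
      simp [norm_smul, norm_exp]).aestronglyMeasurable (∑' j, ‖a j‖)
    (ae_of_all _ fun l => tsum_of_norm_bounded ha.hasSum fun j => by simp [norm_smul, norm_exp])

lemma fourierIntegralIco_tsum_exp_smul {a : ℕ → E} (ha : Summable fun j => ‖a j‖) (m : ℕ) :
    fourierIntegralIco (fun l : ℝ => ∑' j : ℕ, cexp (I * j * l) • a j) m
      = ((2 * π : ℝ) : ℂ) • a m := by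
  calc fourierIntegralIco (fun l : ℝ => ∑' j : ℕ, cexp (I * j * l) • a j) m
      = ∫ l, ∑' j : ℕ, cexp (-I * (m : ℤ) * l) • cexp (I * (j : ℤ) * l) • a j ∂pmeas := by
        simp only [fourierIntegralIco, ← tsum_const_smul'', Int.cast_natCast]
    _ = ∑' j : ℕ, ∫ l, cexp (-I * (m : ℤ) * l) • cexp (I * (j : ℤ) * l) • a j ∂pmeas :=
        integral_tsum_of_norm_le_mul
          (fun j => integrable_exp_neg_I_mul_smul
            (((memLp_exp_I_mul_intCast_mul _ 1).integrable le_rfl).smul_const _) _)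
          (integrable_const 1) ha fun j l => by simp [norm_smul, norm_exp]
    _ = ∑' j : ℕ, if j = m then ((2 * π : ℝ) : ℂ) • a j else 0 := by
        congr with j
        have hmode := fourierIntegralIco_exp m j
        simp only [fourierIntegralIco, smul_eq_mul] at hmode
        simp only [smul_smul, integral_smul_const, hmode, Nat.cast_inj, eq_comm,
          ite_smul, zero_smul]
    _ = ((2 * π : ℝ) : ℂ) • a m := tsum_ite_eq m _

lemma ofReal_tsum_norm_sq_le_lintegral {ι : Type*} [Fintype ι] {φ : ι → ℕ → E →L[ℂ] ℂ}
    (hφ : ∀ r, Summable fun u => ‖φ r u‖) {g : ℝ → E} (hg : MemLp g 2 pmeas) {a : ℕ → E}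
    (hga : ∀ m : ℕ, fourierIntegralIco g m = ((2 * π : ℝ) : ℂ) • a m)
    {s : ℕ → EuclideanSpace ℂ ι} (hs : ∀ t r, s t r = ∑' u : ℕ, φ r u (a (u + t))) :
    Summable (fun t => ‖s t‖ ^ 2) ∧
      ENNReal.ofReal (∑' t, ‖s t‖ ^ 2) ≤ ENNReal.ofReal (1 / (2 * π)) *
        ∫⁻ l, ENNReal.ofReal
          (‖(WithLp.toLp 2 fun r => transfer (φ r) l (g l) : EuclideanSpace ℂ ι)‖ ^ 2) ∂pmeas := by
  have hrow r := tsum_norm_tsum_apply_shift_sq_le (hφ r) hg hga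
  simp only [← hs] at hrow
  have hsum : ∀ t, ‖s t‖ ^ 2 = ∑ r, ‖s t r‖ ^ 2 := fun t => EuclideanSpace.norm_sq_eq _
  have hint r : Integrable (fun l => ‖transfer (φ r) l (g l)‖ ^ 2) pmeas :=
    (memLp_transfer (hφ r) hg).integrable_norm_pow'
  refine ⟨by simpa only [hsum] using summable_sum fun r _ => (hrow r).1, ?_⟩
  have hreal : ∑' t, ‖s t‖ ^ 2
      ≤ (2 * π)⁻¹ * ∫ l, ∑ r, ‖transfer (φ r) l (g l)‖ ^ 2 ∂pmeas := by
    rw [tsum_congr hsum, Summable.tsum_finsetSum fun r _ => (hrow r).1,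
      integral_finsetSum _ fun r _ => hint r, Finset.mul_sum]
    exact Finset.sum_le_sum fun r _ => (hrow r).2
  refine (ENNReal.ofReal_le_ofReal hreal).trans_eq ?_
  rw [ENNReal.ofReal_mul (by positivity), one_div,
    ofReal_integral_eq_lintegral_ofReal (integrable_finsetSum _ fun r _ => hint r)
      (ae_of_all _ fun l => by positivity)]
  simp only [EuclideanSpace.norm_sq_eq]

theorem factorization_lower_bound_general
    (M : ℕ)
    (d : ℕ → Fin M → Elltwo)
    (hd : Summable fun u : ℕ => Real.sqrt (∑ r : Fin M, ‖d u r‖ ^ 2))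
    (a : ℕ → Elltwo)
    (ha1 : Summable fun j : ℕ => ‖a j‖)
    (A : ℝ → Elltwo)
    (hA : ∀ l : ℝ, A l = ∑' j : ℕ, Complex.exp (Complex.I * (j : ℂ) * (l : ℂ)) • a j)
    (s : ℕ → EuclideanSpace ℂ (Fin M))
    (hs : ∀ (t : ℕ) (r : Fin M),
      s t r = ∑' p : ℕ, ∑' k : ℕ, d p r k * a (p + t) k) :
    (∀ (t p : ℕ) (r : Fin M), Summable fun k : ℕ => ‖d p r k * a (p + t) k‖) ∧
    (∀ (t : ℕ) (r : Fin M), Summable fun p : ℕ => ‖∑' k : ℕ, d p r k * a (p + t) k‖) ∧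
    (Summable fun t : ℕ => ‖s t‖ ^ 2) ∧
    ∀ h : ℝ → Elltwo, NegFreq h →
      ENNReal.ofReal (∑' t : ℕ, ‖s t‖ ^ 2) ≤
        ENNReal.ofReal (1 / (2 * Real.pi)) *
          ∫⁻ l, ENNReal.ofReal
            (‖(show EuclideanSpace ℂ (Fin M) from WithLp.toLp 2 fun r : Fin M =>
                ∑' u : ℕ, Complex.exp (-Complex.I * (u : ℂ) * (l : ℂ)) *
                  ∑' k : ℕ, d u r k * (A l - h l) k)‖ ^ 2) ∂pmeas := by
  have hAeq : A = fun l : ℝ => ∑' j : ℕ, cexp (I * j * l) • a j := funext hA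
  set φ : Fin M → ℕ → Elltwo →L[ℂ] ℂ := fun r u => innerSL ℂ (star (d u r))
  have hφ r : Summable fun u => ‖φ r u‖ := by
    simpa [φ] using summable_norm_apply_of_summable_sqrt_sum_sq hd r
  have hsφ t r : s t r = ∑' u : ℕ, φ r u (a (u + t)) := by simp [φ, hs, innerSL_star_apply]
  have hAL2 : MemLp A 2 pmeas := hAeq ▸ memLp_tsum_exp_smul ha1 2
  have hAcoeff : ∀ m : ℕ, fourierIntegralIco A m = ((2 * π : ℝ) : ℂ) • a m :=
    hAeq ▸ fourierIntegralIco_tsum_exp_smul ha1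
  refine ⟨fun t p r => summable_norm_mul_apply _ _, fun t r => ?_,
    (ofReal_tsum_norm_sq_le_lintegral hφ hAL2 hAcoeff hsφ).1, fun h ⟨hh, hh0⟩ => ?_⟩
  · simpa [φ, innerSL_star_apply] using summable_norm_apply_shift (hφ r) ha1 t
  · have hcoeff (m : ℕ) : fourierIntegralIco (fun l => A l - h l) m = ((2 * π : ℝ) : ℂ) • a m := by
      rw [fourierIntegralIco_sub (hAL2.integrable one_le_two) (hh.integrable one_le_two),
        hAcoeff, sub_eq_self]
      exact hh0 m m.cast_nonneg
    simpa [φ, transfer, innerSL_star_apply] using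
      (ofReal_tsum_norm_sq_le_lintegral hφ (hAL2.sub hh) hcoeff hsφ).2

theorem factorization_lower_bound
    (M : ℕ) (hM : 1 ≤ M)
    (d : ℕ → Fin M → Elltwo)
    (hd : Summable fun u : ℕ => Real.sqrt (∑ r : Fin M, ‖d u r‖ ^ 2))
    (a : ℕ → Elltwo)
    (ha1 : Summable fun j : ℕ => ‖a j‖)
    (ha2 : Summable fun j : ℕ => ((j : ℝ) + 1) * ‖a j‖ ^ 2)
    (A : ℝ → Elltwo)
    (hA : ∀ l : ℝ, A l = ∑' j : ℕ, Complex.exp (Complex.I * (j : ℂ) * (l : ℂ)) • a j)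
    (s : ℕ → EuclideanSpace ℂ (Fin M))
    (hs : ∀ (t : ℕ) (r : Fin M),
      s t r = ∑' p : ℕ, ∑' k : ℕ, d p r k * a (p + t) k) :
    (∀ (t p : ℕ) (r : Fin M), Summable fun k : ℕ => ‖d p r k * a (p + t) k‖) ∧
    (∀ (t : ℕ) (r : Fin M), Summable fun p : ℕ => ‖∑' k : ℕ, d p r k * a (p + t) k‖) ∧
    (Summable fun t : ℕ => ‖s t‖ ^ 2) ∧
    ∀ h : ℝ → Elltwo, NegFreq h →
      ENNReal.ofReal (∑' t : ℕ, ‖s t‖ ^ 2) ≤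
        ENNReal.ofReal (1 / (2 * Real.pi)) *
          ∫⁻ l, ENNReal.ofReal
            (‖(show EuclideanSpace ℂ (Fin M) from WithLp.toLp 2 fun r : Fin M =>
                ∑' u : ℕ, Complex.exp (-Complex.I * (u : ℂ) * (l : ℂ)) *
                  ∑' k : ℕ, d u r k * (A l - h l) k)‖ ^ 2) ∂pmeas :=
  factorization_lower_bound_general M d hd a ha1 A hA s hs
end
end
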